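/- arXiv:1402.3157 — 3 statements merged into one kernel-verified Lean document; each statement's English description precedes it below -/
import Mathlib

section
/- Let R be a left Noetherian ring satisfying property (◇). Then for every semi-Artinian left R-module M and every injective left R-module E containing M as an essential submodule, E is semi-Artinian. (That is, property (◇) implies that Dickson's torsion class, the class of semi-Artinian modules, is closed under injective hulls.) -/
universe u v w

/-- The socle of a module: the sum (supremum) of all simple submodules. -/
def moduleSocle (R : Type u) [Ring R] (M : Type v) [AddCommGroup M] [Module R M] :
    Submodule R M :=
  sSup {S : Submodule R M | IsSimpleModule R S}

/-- A submodule `N` of `M` is essential if `N ⊓ L ≠ ⊥` for every nonzero submodule `L` of `M`. -/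
def IsEssentialSubmodule {R : Type u} [Ring R] {M : Type v} [AddCommGroup M] [Module R M]
    (N : Submodule R M) : Prop :=
  ∀ L : Submodule R M, L ≠ ⊥ → N ⊓ L ≠ ⊥

/-- A module is semi-Artinian if every nonzero quotient has a nonzero socle. -/
def IsSemiartinianModule (R : Type u) [Ring R] (M : Type v) [AddCommGroup M] [Module R M] :
    Prop :=
  ∀ N : Submodule R M, N ≠ ⊤ → moduleSocle R (M ⧸ N) ≠ ⊥

/-- A module is singular if the annihilator of each of its elements is an essential left
ideal of `R`. -/
def IsSingularModule (R : Type u) [Ring R] (M : Type v) [AddCommGroup M] [Module R M] : Prop :=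
  ∀ m : M, IsEssentialSubmodule (LinearMap.ker (LinearMap.toSpanSingleton R M m))

/-- Property (◇): every finitely generated left `R`-module containing an essential simple
submodule is Artinian. -/
def HasPropertyDiamond (R : Type u) [Ring R] : Prop :=
  ∀ (M : Type v) [AddCommGroup M] [Module R M], Module.Finite R M →
    (∃ S : Submodule R M, IsSimpleModule R S ∧ IsEssentialSubmodule S) → IsArtinian R M

/-- A left C-ring: every nonzero cyclic singular left module has a nonzero socle. -/
def IsLeftCRing (R : Type u) [Ring R] : Prop :=
  ∀ (M : Type v) [AddCommGroup M] [Module R M], Nontrivial M →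
    (∃ m : M, Submodule.span R {m} = ⊤) → IsSingularModule R M →
    moduleSocle R M ≠ ⊥

/-- The Dickson torsion part of a module: the sum of all its semi-Artinian submodules. -/
def dicksonTorsionPart (R : Type u) [Ring R] (A : Type v) [AddCommGroup A] [Module R A] :
    Submodule R A :=
  sSup {N : Submodule R A | IsSemiartinianModule R N}

/-!
Every nonzero submodule of `E` meets `M`, and every nonzero submodule of the semi-Artinian module
`M` contains a simple one, so the submodule lattice of `E` is atomic. Given `x ∉ N`, it then
suffices to show that `X = R x` is Artinian: its nonzero image in `E / N` then contains a simple
submodule.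

For an atom `A` of `X`, a submodule `N_A` maximal with `N_A ⊓ A = ⊥` makes the image of `A` an
essential simple submodule of `X / N_A`, which is therefore Artinian by (◇). Choosing atoms
`A₁ ≤ X`, `A₂ ≤ N_{A₁}`, `A₃ ≤ N_{A₁} ⊓ N_{A₂}`, … keeps `X / (N_{A₁} ⊓ ⋯ ⊓ N_{Aₙ})` Artinian,
while `A₁ ⊔ ⋯ ⊔ Aₙ` stays disjoint from the intersection and so grows strictly; as `X` is
Noetherian the intersection becomes `⊥`.
-/

theorem exists_maximal_disjoint {α : Type*} [CompleteLattice α] [IsCompactlyGenerated α] (a : α) :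
    ∃ b, Maximal (Disjoint · a) b :=
  zorn_le₀ {b | Disjoint b a} fun c hc hchain =>
    ⟨sSup c, hchain.directedOn.disjoint_sSup_left.mpr hc, fun _ => le_sSup⟩

theorem disjoint_inf_sup_of_le {α : Type*} [Lattice α] [OrderBot α] [IsModularLattice α]
    {a b c d : α} (hab : Disjoint a b) (hcd : Disjoint c d) (hda : d ≤ a) :
    Disjoint (a ⊓ c) (b ⊔ d) := by
  rw [disjoint_iff, inf_right_comm, ← inf_sup_assoc_of_le b hda, hab.eq_bot, bot_sup_eq,
    inf_comm, hcd.eq_bot]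

section

variable {R : Type*} [Ring R] {M : Type*} [AddCommGroup M] [Module R M]

theorem moduleSocle_ne_bot_iff : moduleSocle R M ≠ ⊥ ↔ ∃ S : Submodule R M, IsAtom S := by
  simp only [moduleSocle, Ne, sSup_eq_bot, isSimpleModule_iff_isAtom, Set.mem_ofPred_eq,
    not_forall, exists_prop]
  exact exists_congr fun S => and_iff_left_of_imp IsAtom.ne_bot

namespace Submodule

theorem isAtom_map_iff_of_disjoint_ker {M' : Type*} [AddCommGroup M'] [Module R M']
    {f : M →ₗ[R] M'} {S : Submodule R M} (h : Disjoint S (LinearMap.ker f)) :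
    IsAtom (S.map f) ↔ IsAtom S := by
  simp only [← isSimpleModule_iff_isAtom]
  exact ((LinearEquiv.ofInjective _ (LinearMap.injective_domRestrict_iff.mpr h)).trans
    (LinearEquiv.ofEq _ _ (LinearMap.range_domRestrict S f))).isSimpleModule_iff.symm

theorem isAtomic_submodule (P : Submodule R M) [IsAtomic (Submodule R M)] :
    IsAtomic (Submodule R P) :=
  P.mapIic.isAtomic_iff.mpr inferInstance

theorem exists_isAtom_le {P L : Submodule R M} [IsAtomic (Submodule R P)] (hLP : L ≤ P)
    (hL : L ≠ ⊥) : ∃ A, IsAtom A ∧ A ≤ L := by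
  have := P.mapIic.isAtomic_iff.mp inferInstance
  obtain ⟨A, hA, hAL⟩ := (eq_bot_or_exists_atom_le (⟨L, hLP⟩ : Set.Iic P)).resolve_left
    (by simpa [Subtype.ext_iff] using hL)
  exact ⟨A, hA.of_isAtom_coe_Iic, hAL⟩

theorem isEssentialSubmodule_map_mkQ {N L : Submodule R M} (hN : Maximal (Disjoint · L) N) :
    IsEssentialSubmodule (L.map N.mkQ) := by
  intro Q hQ hLQ
  have hNQ : N < Q.comap N.mkQ := (N.le_comap_mkQ Q).lt_of_ne fun h => hQ <| by
    rw [← map_comap_eq_of_surjective N.mkQ_surjective Q, ← h, mkQ_map_self]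
  refine hN.not_prop_of_gt hNQ (disjoint_def.mpr fun x hxQ hxL => ?_)
  have hx : N.mkQ x ∈ L.map N.mkQ ⊓ Q := ⟨mem_map_of_mem hxL, hxQ⟩
  rw [hLQ, mem_bot, mkQ_apply, Quotient.mk_eq_zero] at hx
  exact disjoint_def.mp hN.prop x hx hxL

end Submodule

theorem isAtomic_of_isEssentialSubmodule {N : Submodule R M} [IsAtomic (Submodule R N)]
    (hN : IsEssentialSubmodule N) : IsAtomic (Submodule R M) :=
  ⟨fun L => or_iff_not_imp_left.mpr fun hL =>
    (Submodule.exists_isAtom_le inf_le_left (hN L hL)).imp fun _ hA =>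
      ⟨hA.1, hA.2.trans inf_le_right⟩⟩

theorem IsSemiartinianModule.isAtomic (hM : IsSemiartinianModule R M) :
    IsAtomic (Submodule R M) := by
  refine ⟨fun L => or_iff_not_imp_left.mpr fun hL => ?_⟩
  obtain ⟨N, hN⟩ := exists_maximal_disjoint L
  have hNtop : N ≠ ⊤ := by
    rintro rfl
    exact hL (top_disjoint.mp hN.prop)
  obtain ⟨A, hA⟩ := moduleSocle_ne_bot_iff.mp (hM N hNtop)
  have hAL : A ≤ L.map N.mkQ := by
    by_contra hAL
    exact Submodule.isEssentialSubmodule_map_mkQ hN A hA.ne_bot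
      (hA.not_le_iff_disjoint.mp hAL).symm.eq_bot
  have hdisj : Disjoint (L ⊓ A.comap N.mkQ) (LinearMap.ker N.mkQ) := by
    rw [Submodule.ker_mkQ]
    exact hN.prop.symm.mono_left inf_le_left
  refine ⟨L ⊓ A.comap N.mkQ, ?_, inf_le_left⟩
  rwa [← Submodule.isAtom_map_iff_of_disjoint_ker hdisj, ← Submodule.map_inf_eq_map_inf_comap,
    inf_eq_right.mpr hAL]

theorem isArtinian_quotient_inf {K N : Submodule R M} [IsArtinian R (M ⧸ K)]
    [IsArtinian R (M ⧸ N)] : IsArtinian R (M ⧸ (K ⊓ N)) := by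
  have hker : K ⊓ N = LinearMap.ker (K.mkQ.prod N.mkQ) := by
    rw [LinearMap.ker_prod, Submodule.ker_mkQ, Submodule.ker_mkQ]
  exact isArtinian_of_injective _ (LinearMap.ker_eq_bot.mp (Submodule.ker_liftQ_eq_bot' _ _ hker))

end

namespace HasPropertyDiamond

variable {R : Type u} [Ring R] {X : Type v} [AddCommGroup X] [Module R X] [Module.Finite R X]

theorem isArtinian_quotient (h : HasPropertyDiamond.{u, v} R) {A N : Submodule R X} (hA : IsAtom A)
    (hN : Maximal (Disjoint · A) N) : IsArtinian R (X ⧸ N) := by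
  refine h _ inferInstance ⟨A.map N.mkQ, isSimpleModule_iff_isAtom.mpr ?_,
    Submodule.isEssentialSubmodule_map_mkQ hN⟩
  rwa [Submodule.isAtom_map_iff_of_disjoint_ker (by rw [Submodule.ker_mkQ]; exact hN.prop.symm)]

theorem isArtinian_of_isAtomic [IsNoetherianRing R] (h : HasPropertyDiamond.{u, v} R)
    [IsAtomic (Submodule R X)] : IsArtinian R X := by
  have : IsNoetherian R X := isNoetherian_of_isNoetherianRing_of_finite R X
  suffices ∀ B K : Submodule R X, Disjoint K B → IsArtinian R (X ⧸ K) → IsArtinian R X from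
    this ⊥ ⊤ disjoint_bot_right inferInstance
  intro B
  induction B using WellFoundedGT.induction with
  | _ B ih =>
    intro K hKB hK
    obtain rfl | ⟨A, hA, hAK⟩ := eq_bot_or_exists_atom_le K
    · exact isArtinian_of_injective (⊥ : Submodule R X).mkQ
        (LinearMap.ker_eq_bot.mp (Submodule.ker_mkQ ⊥))
    obtain ⟨N, hN⟩ := exists_maximal_disjoint A
    have := h.isArtinian_quotient hA hN
    have hBA : B < B ⊔ A :=
      left_lt_sup.mpr fun hAB => hA.ne_bot ((hKB.mono_left hAK).eq_bot_of_le hAB)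
    exact ih _ hBA (K ⊓ N) (disjoint_inf_sup_of_le hKB hN.prop hAK) isArtinian_quotient_inf

end HasPropertyDiamond

theorem stmt3_general (R : Type u) [Ring R] [IsNoetherianRing R] (h : HasPropertyDiamond.{u, v} R)
    (E : Type v) [AddCommGroup E] [Module R E]
    (M : Submodule R E) (hM : IsSemiartinianModule R M) (hMe : IsEssentialSubmodule M) :
    IsSemiartinianModule R E := by
  have := hM.isAtomic
  have := isAtomic_of_isEssentialSubmodule hMe
  intro N hN
  obtain ⟨x, -, hx⟩ := SetLike.exists_of_lt hN.lt_top
  let X := Submodule.span R {x}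
  have := X.isAtomic_submodule
  have : IsArtinian R X := h.isArtinian_of_isAtomic
  let f := N.mkQ ∘ₗ X.subtype
  have hf : LinearMap.range f ≠ ⊥ := LinearMap.range_eq_bot.not.mpr fun hf => hx <|
    (Submodule.Quotient.mk_eq_zero N).mp
      (LinearMap.congr_fun hf ⟨x, Submodule.mem_span_singleton_self x⟩)
  exact moduleSocle_ne_bot_iff.mpr ((Submodule.exists_isAtom_le le_rfl hf).imp fun _ => And.left)

/-- Over a left Noetherian ring with property (◇), an injective module containing a
semi-Artinian essential submodule is itself semi-Artinian. -/
theorem stmt3 (R : Type u) [Ring R] [IsNoetherianRing R] (h : HasPropertyDiamond.{u, v} R)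
    (E : Type v) [AddCommGroup E] [Module R E] [Module.Injective R E]
    (M : Submodule R E) (hM : IsSemiartinianModule R M) (hMe : IsEssentialSubmodule M) :
    IsSemiartinianModule R E :=
  stmt3_general R h E M hM hMe
end

section
/- Let R be a left Noetherian ring such that every nonzero cyclic singular left R-module has a nonzero socle (i.e., R is a left Noetherian left C-ring). Then R satisfies property (◇): every finitely generated left R-module containing an essential simple submodule is Artinian. -/
universe u v w

section Aux

variable {R : Type u} [Ring R] {M : Type v} [AddCommGroup M] [Module R M]

/-- A simple module is Artinian. -/
lemma aux_isArtinian_of_isSimpleModule (S : Submodule R M) (hS : IsSimpleModule R S) :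
    IsArtinian R S := by
  haveI := hS
  haveI : Finite (Submodule R S) :=
    Finite.of_equiv Bool (@IsSimpleOrder.equivBool _ (Classical.decEq _) _ _ _).symm
  rw [isArtinian_iff]
  exact (Finite.to_wellFoundedLT (α := Submodule R S)).wf

/-- The socle is nonzero iff there is a simple submodule. -/
lemma aux_socle_ne_bot_iff :
    moduleSocle R M ≠ ⊥ ↔ ∃ S : Submodule R M, IsSimpleModule R S := by
  constructor
  · intro h
    by_contra hc
    push_neg at hc
    have : {S : Submodule R M | IsSimpleModule R S} = ∅ := by
      ext S; simp [hc S]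
    rw [moduleSocle, this, sSup_empty] at h
    exact h rfl
  · rintro ⟨S, hS⟩
    intro h
    have hle : S ≤ moduleSocle R M := le_sSup hS
    have : S ≠ ⊥ := (isSimpleModule_iff_isAtom.mp hS).1
    exact this (le_antisymm (h ▸ hle) bot_le)

/-- If `A` is an essential submodule, the quotient `M ⧸ A` is singular. -/
lemma aux_quotient_singular (A : Submodule R M) (hA : IsEssentialSubmodule A) :
    IsSingularModule R (M ⧸ A) := by
  intro q
  obtain ⟨x, rfl⟩ := A.mkQ_surjective q
  intro J hJ
  set K : Submodule R M := J.map (LinearMap.toSpanSingleton R M x) with hKdef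
  by_cases hK : K = ⊥
  · -- J annihilates x, so J is contained in the kernel
    have hle : J ≤ LinearMap.ker (LinearMap.toSpanSingleton R (M ⧸ A) (A.mkQ x)) := by
      intro r hr
      have hrx : (r • x : M) = 0 := by
        have : (r • x : M) ∈ K := ⟨r, hr, by simp [LinearMap.toSpanSingleton_apply]⟩
        simpa [hK] using this
      simp only [LinearMap.mem_ker, LinearMap.toSpanSingleton_apply]
      rw [← map_smul, hrx, map_zero]
    rwa [inf_eq_right.mpr hle]
  · have h2 := hA K hK
    obtain ⟨y, hy, hyne⟩ := Submodule.ne_bot_iff _ |>.mp (by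
      intro h; exact h2 h)
    obtain ⟨hyA, hyK⟩ := Submodule.mem_inf.mp hy
    obtain ⟨r, hrJ, hry⟩ := Submodule.mem_map.mp hyK
    rw [LinearMap.toSpanSingleton_apply] at hry
    refine Submodule.ne_bot_iff _ |>.mpr ⟨r, Submodule.mem_inf.mpr ⟨?_, hrJ⟩, ?_⟩
    · simp only [LinearMap.mem_ker, LinearMap.toSpanSingleton_apply]
      rw [← map_smul, hry, Submodule.mkQ_apply, Submodule.Quotient.mk_eq_zero]
      exact hyA
    · rintro rfl
      exact hyne (by rw [← hry, zero_smul])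

/-- A submodule of a singular module is singular. -/
lemma aux_submodule_singular (hM : IsSingularModule R M) (C : Submodule R M) :
    IsSingularModule R C := by
  intro m
  have : LinearMap.ker (LinearMap.toSpanSingleton R C m)
      = LinearMap.ker (LinearMap.toSpanSingleton R M (m : M)) := by
    ext r
    simp only [LinearMap.mem_ker, LinearMap.toSpanSingleton_apply]
    constructor
    · intro h
      have := congrArg (Subtype.val) h
      simpa using this
    · intro h
      exact Subtype.ext (by simpa using h)
  rw [this]
  exact hM (m : M)

/-- In a nonzero singular module over a left C-ring, there is a simple submodule. -/
lemma aux_exists_simple_of_singular (hC : IsLeftCRing.{u, v} R)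
    (hM : IsSingularModule R M) (q : M) (hq : q ≠ 0) :
    ∃ T : Submodule R M, IsSimpleModule R T := by
  set C : Submodule R M := Submodule.span R {q} with hCdef
  have hqC : q ∈ C := Submodule.mem_span_singleton_self q
  haveI : Nontrivial C := ⟨⟨⟨q, hqC⟩, 0, by
    intro h
    exact hq (by simpa using congrArg Subtype.val h)⟩⟩
  have hcyc : ∃ m : C, Submodule.span R {m} = ⊤ := by
    refine ⟨⟨q, hqC⟩, ?_⟩
    rw [eq_top_iff]
    rintro ⟨y, hy⟩ -
    obtain ⟨r, rfl⟩ := Submodule.mem_span_singleton.mp hy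
    exact Submodule.mem_span_singleton.mpr ⟨r, rfl⟩
  have hsoc := hC C inferInstance hcyc (aux_submodule_singular hM C)
  obtain ⟨T', hT'⟩ := aux_socle_ne_bot_iff.mp hsoc
  refine ⟨T'.map C.subtype, ?_⟩
  haveI := hT'
  exact IsSimpleModule.congr
    (Submodule.equivMapOfInjective C.subtype C.injective_subtype T').symm

end Aux

/-- A left Noetherian left C-ring satisfies property (◇). -/
theorem stmt13 (R : Type u) [Ring R] [IsNoetherianRing R] (hC : IsLeftCRing.{u, v} R) :
    HasPropertyDiamond.{u, v} R := by
  intro M _ _ hfin hex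
  obtain ⟨S, hSsimp, hSess⟩ := hex
  haveI : IsNoetherian R M := isNoetherian_of_isNoetherianRing_of_finite R M
  -- Take a maximal element of the set of Artinian submodules containing S.
  set 𝒜 : Set (Submodule R M) := {N | S ≤ N ∧ IsArtinian R N} with h𝒜
  have hSA : S ∈ 𝒜 := ⟨le_rfl, aux_isArtinian_of_isSimpleModule S hSsimp⟩
  obtain ⟨A, hA𝒜, hAmax⟩ :=
    (set_has_maximal_iff_noetherian.mpr (inferInstance : IsNoetherian R M)) 𝒜 ⟨S, hSA⟩
  obtain ⟨hSA', hAart⟩ := hA𝒜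
  -- Claim: A = ⊤.
  have hAtop : A = ⊤ := by
    by_contra hAne
    -- A is essential since it contains the essential submodule S
    have hAess : IsEssentialSubmodule A := by
      intro L hL
      intro h
      exact hSess L hL (le_antisymm (h ▸ inf_le_inf_right L hSA') bot_le)
    -- the quotient M ⧸ A is singular and nonzero
    have hsing := aux_quotient_singular A hAess
    obtain ⟨x, hx⟩ : ∃ x : M, x ∉ A := by
      by_contra hc
      push_neg at hc
      exact hAne (eq_top_iff.mpr fun y _ => hc y)
    have hq : (A.mkQ x : M ⧸ A) ≠ 0 := by
      rw [Submodule.mkQ_apply, Ne, Submodule.Quotient.mk_eq_zero]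
      exact hx
    obtain ⟨T, hTsimp⟩ := aux_exists_simple_of_singular hC hsing (A.mkQ x) hq
    -- pull T back to a submodule B of M, strictly containing A, and Artinian
    set B : Submodule R M := T.comap A.mkQ with hBdef
    have hAB : A ≤ B := by
      intro a ha
      show A.mkQ a ∈ T
      have h0 : A.mkQ a = 0 := by
        rw [Submodule.mkQ_apply, Submodule.Quotient.mk_eq_zero]; exact ha
      rw [h0]; exact T.zero_mem
    have hmapB : B.map A.mkQ = T :=
      Submodule.map_comap_eq_of_surjective A.mkQ_surjective T
    -- B is Artinian: extension of A by T
    haveI hTart : IsArtinian R T := aux_isArtinian_of_isSimpleModule T hTsimp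
    have hBart : IsArtinian R B := by
      have hmem : ∀ b : B, A.mkQ (b : M) ∈ T := fun b => b.2
      let g : B →ₗ[R] T := LinearMap.codRestrict T (A.mkQ.domRestrict B) hmem
      have hrk : LinearMap.range (Submodule.inclusion hAB) = LinearMap.ker g := by
        ext b
        rw [Submodule.range_inclusion]
        constructor
        · intro hb
          have : (b : M) ∈ A := hb
          apply Subtype.ext
          show A.mkQ (b : M) = 0
          rw [Submodule.mkQ_apply, Submodule.Quotient.mk_eq_zero]
          exact this
        · intro hb
          have : A.mkQ (b : M) = 0 := congrArg Subtype.val hb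
          rw [Submodule.mkQ_apply, Submodule.Quotient.mk_eq_zero] at this
          exact this
      exact isArtinian_of_range_eq_ker (Submodule.inclusion hAB) g hrk
    -- B strictly contains A, contradicting maximality
    have hABlt : A < B := by
      refine lt_of_le_of_ne hAB ?_
      intro h
      have hTbot : T = ⊥ := by
        rw [← hmapB, ← h]
        rw [eq_bot_iff]
        rintro t ⟨a, ha, rfl⟩
        simp only [Submodule.mkQ_apply, Submodule.mem_bot, Submodule.Quotient.mk_eq_zero]
        exact ha
      exact (isSimpleModule_iff_isAtom.mp hTsimp).1 hTbot
    exact hAmax B ⟨le_trans hSA' hAB, hBart⟩ hABlt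
  -- Conclude: M ≃ ⊤ = A is Artinian
  subst hAtop
  exact (Submodule.topEquiv (R := R) (M := M)).isArtinian_iff.mp hAart
end

section
/- Let K be a field and R = K[x, y] the polynomial ring in two indeterminates. Then the ideal I = (x) is an essential R-submodule of R, the R-module R/I is singular, and R/I contains no simple R-submodules (its socle is zero). Consequently, R is not a C-ring: not every nonzero cyclic singular R-module has a nonzero socle. -/
universe u v w

/-!
In a domain every nonzero ideal is essential, and `R ⧸ I` is annihilated by `I`, so it is singular
as soon as `I` is essential. For a prime `P`, a simple submodule of `R ⧸ P` is generated by each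
of its nonzero elements `s`; for `y ∉ P` this gives `s = r y s`, so `y` is invertible modulo `P`.
Hence `R ⧸ P` has zero socle unless `P` is maximal, and `(x) ⊊ (x, y) ⊊ K[x, y]`.
-/

section Essential

variable {R : Type u} {M : Type v}

theorem IsEssentialSubmodule.mono [Ring R] [AddCommGroup M] [Module R M]
    {N N' : Submodule R M} (hN : IsEssentialSubmodule N) (h : N ≤ N') :
    IsEssentialSubmodule N' := fun L hL ↦
  ne_bot_of_le_ne_bot (hN L hL) (inf_le_inf_right L h)

theorem Ideal.isEssentialSubmodule_of_ne_bot [CommRing R] [IsDomain R] {I : Ideal R}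
    (hI : I ≠ ⊥) : IsEssentialSubmodule I := by
  intro L hL
  obtain ⟨a, haI, ha⟩ := Submodule.exists_mem_ne_zero_of_ne_bot hI
  obtain ⟨l, hlL, hl⟩ := Submodule.exists_mem_ne_zero_of_ne_bot hL
  exact Submodule.ne_bot_iff _ |>.mpr
    ⟨a * l, ⟨I.mul_mem_right l haI, L.smul_mem a hlL⟩, mul_ne_zero ha hl⟩

theorem isSingularModule_of_le_annihilator [Ring R] [AddCommGroup M] [Module R M]
    {I : Ideal R} (hI : IsEssentialSubmodule I) (h : I ≤ Module.annihilator R M) :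
    IsSingularModule R M := fun m ↦
  hI.mono fun r hr ↦ by
    simpa using (Module.mem_annihilator.mp (h hr)) m

end Essential

section Socle

variable {R : Type u} {M : Type v}

theorem moduleSocle_eq_bot [Ring R] [AddCommGroup M] [Module R M]
    (h : ∀ S : Submodule R M, ¬ IsSimpleModule R S) : moduleSocle R M = ⊥ := by
  rw [moduleSocle, sSup_eq_bot]
  exact fun S hS ↦ (h S hS).elim

theorem Ideal.IsPrime.isMaximal_of_isSimpleModule [CommRing R] {P : Ideal R} (hP : P.IsPrime)
    (S : Submodule R (R ⧸ P)) [IsSimpleModule R S] : P.IsMaximal := by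
  have := IsSimpleModule.nontrivial R S
  obtain ⟨s, hs⟩ := exists_ne (0 : S)
  rw [Ideal.Quotient.maximal_ideal_iff_isField_quotient]
  refine ⟨exists_pair_ne _, mul_comm, fun {a} ha ↦ ?_⟩
  obtain ⟨y, rfl⟩ := Ideal.Quotient.mk_surjective a
  have smul_eq (r : R) (x : S) : ((r • x : S) : R ⧸ P) = Ideal.Quotient.mk P r * x := by
    rw [Submodule.coe_smul, Algebra.smul_def, Ideal.Quotient.algebraMap_eq]
  have hys : y • s ≠ 0 := by
    rw [ne_eq, ← Submodule.coe_eq_zero, smul_eq]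
    exact mul_ne_zero ha (by simpa using hs)
  obtain ⟨r, hr⟩ := Submodule.mem_span_singleton.mp
    ((IsSimpleModule.span_singleton_eq_top R hys).ge (Submodule.mem_top (x := s)))
  refine ⟨Ideal.Quotient.mk P r, mul_right_cancel₀ (b := (s : R ⧸ P)) (by simpa using hs) ?_⟩
  have hr' := congrArg Subtype.val hr
  rw [smul_smul, smul_eq, map_mul] at hr'
  linear_combination hr'

theorem moduleSocle_quotient_eq_bot [CommRing R] {P : Ideal R} (hP : P.IsPrime)
    (hP' : ¬ P.IsMaximal) : moduleSocle R (R ⧸ P) = ⊥ :=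
  moduleSocle_eq_bot fun S _ ↦ hP' (hP.isMaximal_of_isSimpleModule S)

end Socle

theorem not_isLeftCRing_of_isEssentialSubmodule {R : Type u} [CommRing R] {I : Ideal R}
    (hI : I ≠ ⊤) (hess : IsEssentialSubmodule I) (hsoc : moduleSocle R (R ⧸ I) = ⊥) :
    ¬ IsLeftCRing.{u, u} R := fun hC ↦
  hC (R ⧸ I) (Ideal.Quotient.nontrivial_iff.mpr hI) ⟨1, Ideal.Quotient.span_singleton_one I⟩
    (isSingularModule_of_le_annihilator hess Ideal.annihilator_quotient.ge) hsoc

theorem MvPolynomial.not_isMaximal_span_X {σ R : Type*} [CommRing R] [Nontrivial R] {i j : σ}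
    (hij : i ≠ j) : ¬ (Ideal.span {X i} : Ideal (MvPolynomial σ R)).IsMaximal := by
  intro hmax
  have hle : Ideal.span {X i, X j} ≤ RingHom.ker (constantCoeff : MvPolynomial σ R →+* R) := by
    simp [Ideal.span_le, Set.insert_subset_iff]
  have heq := hmax.eq_of_le (ne_top_of_le_ne_top (RingHom.ker_ne_top _) hle)
    (Ideal.span_mono (Set.singleton_subset_iff.mpr (Set.mem_insert _ _)))
  have hj : X j ∈ Ideal.span {(X i : MvPolynomial σ R)} :=
    heq ▸ Ideal.subset_span (Set.mem_insert_of_mem _ rfl)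
  exact hij (X_dvd_X.mp (Ideal.mem_span_singleton.mp hj))

/-- In `R = K[x,y]`, the ideal `(x)` is essential, `R/(x)` is a cyclic singular module
with zero socle, and hence `R` is not a C-ring. -/
theorem stmt19 (K : Type u) [Field K] :
    IsEssentialSubmodule
      (Ideal.span {MvPolynomial.X 0} : Ideal (MvPolynomial (Fin 2) K)) ∧
    IsSingularModule (MvPolynomial (Fin 2) K)
      (MvPolynomial (Fin 2) K ⧸
        (Ideal.span {MvPolynomial.X 0} : Ideal (MvPolynomial (Fin 2) K))) ∧
    moduleSocle (MvPolynomial (Fin 2) K)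
      (MvPolynomial (Fin 2) K ⧸
        (Ideal.span {MvPolynomial.X 0} : Ideal (MvPolynomial (Fin 2) K))) = ⊥ ∧
    ¬ IsLeftCRing.{u, u} (MvPolynomial (Fin 2) K) := by
  set I : Ideal (MvPolynomial (Fin 2) K) := Ideal.span {MvPolynomial.X 0}
  have hprime : I.IsPrime :=
    (Ideal.span_singleton_prime (MvPolynomial.X_ne_zero _)).mpr MvPolynomial.X_prime
  have hess : IsEssentialSubmodule I := Ideal.isEssentialSubmodule_of_ne_bot (by simp [I])
  have hsoc : moduleSocle _ (_ ⧸ I) = ⊥ :=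
    moduleSocle_quotient_eq_bot hprime (MvPolynomial.not_isMaximal_span_X (j := 1) (by decide))
  exact ⟨hess, isSingularModule_of_le_annihilator hess Ideal.annihilator_quotient.ge, hsoc,
    not_isLeftCRing_of_isEssentialSubmodule hprime.ne_top hess hsoc⟩
end
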